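/- arXiv:2510.18365 — 2 statements merged into one kernel-verified Lean document; each statement's English description precedes it below -/
import Mathlib

section
/- There exists a universal constant C > 0 such that the following holds. Let ν > 0, k ∈ ℝ with k ≠ 0, and let f : [0,∞) × [−1,1] → ℂ be continuous, with continuous derivatives ∂_t f, ∂_y f, ∂²_y f and ∂_t ∂_y f, satisfying ∂_t f(t,y) = ν(∂²_y f(t,y) − k² f(t,y)) − i k y f(t,y) for all t ≥ 0 and y ∈ (−1,1), and f(t,−1) = f(t,1) = 0 for all t ≥ 0. Then for every t ≥ 0, ‖f(t,·)‖_{L²(−1,1)} ≤ C (1 + νt + ν k² t³)^{−1/2} ‖f(0,·)‖_{L²(−1,1)}. -/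
/-!
Write `A(t) = ‖f(t)‖²` and `B(t) = ‖∂_y f(t)‖²` in `L²(-1, 1)`. After integrating by parts the
drift `iky f` drops out of the energy balance, so `A' = -2νB - 2νk²A`; since `f(t, -1) = 0`,
Poincaré gives `A ≤ 4B`, whence `νt A(t) ≤ 2 A(0)`.

For the cubic rate, the field `u_s = (∂_y + ik(t - s)) f` is used: `∂_y + ikt` commutes with
`∂_t + iky - ν(∂_y² - k²)`, so `‖u_s(t)‖²` obeys the same energy balance (the boundary terms vanish
because `f` and `∂_t f` vanish at `y = ±1`) and is nonincreasing, with `u_s(s) = ∂_y f(s)`.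
As `ik(τ - s) f = u_s - ∂_y f`, taking `s` in the first and `τ` in the last third of `[0, t]`
with `B(s)`, `B(τ)` at most the mean of `B` there gives `k²t² A(t) ≲ B(s) + B(τ)`, and
`2ν ∫₀ᵗ B ≤ A(0)` yields `νk²t³ A(t) ≤ 27 A(0)`.
-/

open Set

noncomputable def L2norm (h : ℝ → ℂ) : ℝ :=
  Real.sqrt (∫ y in (-1 : ℝ)..1, ‖h y‖ ^ 2)

open MeasureTheory intervalIntegral Complex
open scoped RealInnerProductSpace Interval

section ParametricIntegral

variable {E : Type*} [NormedAddCommGroup E] [NormedSpace ℝ E] {a b : ℝ}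

theorem continuousOn_intervalIntegral_of_continuousOn_prod {F : ℝ → ℝ → E} (hab : a ≤ b)
    (hF : ContinuousOn (fun p : ℝ × ℝ => F p.1 p.2) (Ici 0 ×ˢ Icc a b)) :
    ContinuousOn (fun s => ∫ y in a..b, F s y) (Ici 0) := by
  let G : ℝ → ℝ → E := fun s y => F (max s 0) (projIcc a b hab y)
  have hG : Continuous (Function.uncurry G) :=
    hF.comp_continuous (f := fun p : ℝ × ℝ => (max p.1 0, (projIcc a b hab p.2 : ℝ)))
      (by fun_prop) fun p => ⟨le_max_right p.1 0, (projIcc a b hab p.2).2⟩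
  refine (continuous_parametric_intervalIntegral_of_continuous' hG a b).continuousOn.congr
    fun s hs => integral_congr fun y hy => ?_
  rw [uIcc_of_le hab] at hy
  simp [G, max_eq_left (mem_Ici.mp hs), projIcc_of_mem hab hy]

theorem hasDerivAt_intervalIntegral_of_continuousOn_prod {F F' : ℝ → ℝ → E} {t : ℝ}
    (hab : a ≤ b) (ht : 0 < t)
    (hF : ContinuousOn (fun p : ℝ × ℝ => F p.1 p.2) (Ici 0 ×ˢ Icc a b))
    (hF' : ContinuousOn (fun p : ℝ × ℝ => F' p.1 p.2) (Ici 0 ×ˢ Icc a b))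
    (hderiv : ∀ s > 0, ∀ y ∈ Icc a b, HasDerivAt (F · y) (F' s y) s) :
    HasDerivAt (fun s => ∫ y in a..b, F s y) (∫ y in a..b, F' t y) t := by
  have hIoc : Ι a b ⊆ Icc a b := by rw [uIoc_of_le hab]; exact Ioc_subset_Icc_self
  obtain ⟨M, hM⟩ := (isCompact_Icc.prod isCompact_Icc).exists_bound_of_continuousOn
    (hF'.mono (prod_mono (fun s (hs : s ∈ Icc (t / 2) (2 * t)) => (half_pos ht).le.trans hs.1)
      subset_rfl))
  refine (hasDerivAt_integral_of_dominated_loc_of_deriv_le (bound := fun _ => M)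
    (Ioo_mem_nhds (half_lt_self ht) (by linarith : t < 2 * t)) ?_
    ((hF.uncurry_left t ht.le).intervalIntegrable_of_Icc hab)
    (((hF'.uncurry_left t ht.le).mono hIoc).aestronglyMeasurable measurableSet_uIoc) ?_
    intervalIntegrable_const ?_).2
  · filter_upwards [Ioi_mem_nhds ht] with s hs
    exact ((hF.uncurry_left s (le_of_lt hs)).mono hIoc).aestronglyMeasurable measurableSet_uIoc
  · exact ae_of_all _ fun y hy s hs => hM (s, y) ⟨Ioo_subset_Icc_self hs, hIoc hy⟩
  · exact ae_of_all _ fun y hy s hs => hderiv s ((half_pos ht).trans hs.1) y (hIoc hy)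

theorem hasDerivAt_mixed_partial_comm [CompleteSpace E] {g gt gy gty : ℝ → ℝ → E} {t y : ℝ}
    (ht : 0 < t) (hy : y ∈ Ioo a b)
    (hgy : ContinuousOn (fun p : ℝ × ℝ => gy p.1 p.2) (Ici 0 ×ˢ Icc a b))
    (hgty : ContinuousOn (fun p : ℝ × ℝ => gty p.1 p.2) (Ici 0 ×ˢ Icc a b))
    (hdt : ∀ s > 0, ∀ x ∈ Icc a b, HasDerivAt (g · x) (gt s x) s)
    (hdy : ∀ s > 0, ∀ x ∈ Icc a b, HasDerivAt (g s) (gy s x) x)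
    (hdty : ∀ s > 0, ∀ x ∈ Icc a b, HasDerivAt (gy · x) (gty s x) s) :
    HasDerivAt (gt t) (gty t y) y := by
  have hprimitive : ∀ x ∈ Icc a b, gt t x - gt t a = ∫ z in a..x, gty t z := by
    intro x hx
    have hsub : Icc a x ⊆ Icc a b := Icc_subset_Icc_right hx.2
    have hftc : ∀ s > 0, g s x - g s a = ∫ z in a..x, gy s z := fun s hs =>
      (integral_eq_sub_of_hasDerivAt_of_le hx.1 (fun z hz => (hdy s hs z (hsub hz)).continuousAt
        |>.continuousWithinAt) (fun z hz => hdy s hs z (hsub (Ioo_subset_Icc_self hz)))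
        (((hgy.uncurry_left s hs.le).mono hsub).intervalIntegrable_of_Icc hx.1)).symm
    have hderiv := hasDerivAt_intervalIntegral_of_continuousOn_prod hx.1 ht
      (hgy.mono (prod_mono subset_rfl hsub)) (hgty.mono (prod_mono subset_rfl hsub))
      fun s hs z hz => hdty s hs z (hsub hz)
    refine ((hdt t ht x hx).sub (hdt t ht a (left_mem_Icc.2 (hx.1.trans hx.2)))).unique
      (hderiv.congr_of_eventuallyEq ?_)
    filter_upwards [Ioi_mem_nhds ht] with s hs using hftc s hs
  have hcont := hgty.uncurry_left t ht.le
  have hprimitive_deriv : HasDerivAt (fun x => ∫ z in a..x, gty t z) (gty t y) y :=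
    integral_hasDerivAt_right ((hcont.mono (Icc_subset_Icc_right hy.2.le)).intervalIntegrable_of_Icc
      hy.1.le) ((hcont.mono Ioo_subset_Icc_self).stronglyMeasurableAtFilter isOpen_Ioo y hy)
      (hcont.continuousAt (Icc_mem_nhds hy.1 hy.2))
  refine (hprimitive_deriv.const_add (gt t a)).congr_of_eventuallyEq ?_
  filter_upwards [Icc_mem_nhds hy.1 hy.2] with x hx
  rw [← hprimitive x hx, add_sub_cancel]

end ParametricIntegral

section InnerProduct

variable {F : Type*} [NormedAddCommGroup F] [InnerProductSpace ℝ F] {a b : ℝ}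

theorem hasDerivAt_intervalIntegral_norm_sq {w w' : ℝ → ℝ → F} {t : ℝ} (hab : a ≤ b)
    (ht : 0 < t) (hw : ContinuousOn (fun p : ℝ × ℝ => w p.1 p.2) (Ici 0 ×ˢ Icc a b))
    (hw' : ContinuousOn (fun p : ℝ × ℝ => w' p.1 p.2) (Ici 0 ×ˢ Icc a b))
    (hderiv : ∀ s > 0, ∀ y ∈ Icc a b, HasDerivAt (w · y) (w' s y) s) :
    HasDerivAt (fun s => ∫ y in a..b, ‖w s y‖ ^ 2) (∫ y in a..b, 2 * ⟪w t y, w' t y⟫) t :=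
  hasDerivAt_intervalIntegral_of_continuousOn_prod hab ht (hw.norm.pow 2)
    (continuousOn_const.mul (hw.inner hw')) fun s hs y hy => (hderiv s hs y hy).norm_sq

theorem integral_inner_deriv_add_inner_deriv_eq_zero {p q p' q' : ℝ → F} (hab : a ≤ b)
    (hp : ContinuousOn p (Icc a b)) (hq : ContinuousOn q (Icc a b))
    (hp' : ContinuousOn p' (Icc a b)) (hq' : ContinuousOn q' (Icc a b))
    (hdp : ∀ y ∈ Ioo a b, HasDerivAt p (p' y) y) (hdq : ∀ y ∈ Ioo a b, HasDerivAt q (q' y) y)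
    (hpa : p a = 0) (hpb : p b = 0) :
    ∫ y in a..b, (⟪p' y, q y⟫ + ⟪p y, q' y⟫) = 0 := by
  rw [integral_eq_sub_of_hasDerivAt_of_le hab (hp.inner hq)
    (fun y hy => ((hdp y hy).inner ℝ (hdq y hy)).congr_deriv (add_comm _ _))
    (((hp'.inner hq).add (hp.inner hq')).intervalIntegrable_of_Icc hab), hpa, hpb]
  simp

end InnerProduct

section Poincare

variable {a b : ℝ}

theorem sq_intervalIntegral_le {g : ℝ → ℝ} (hab : a ≤ b) (hg : ContinuousOn g (Icc a b)) :
    (∫ y in a..b, g y) ^ 2 ≤ (b - a) * ∫ y in a..b, g y ^ 2 := by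
  rcases hab.eq_or_lt with rfl | hlt
  · simp
  set S := ∫ y in a..b, g y
  set Q := ∫ y in a..b, g y ^ 2
  have hg1 := hg.intervalIntegrable_of_Icc (μ := volume) hab
  have hg2 : IntervalIntegrable (fun y => g y ^ 2) volume a b :=
    (hg.pow 2).intervalIntegrable_of_Icc hab
  -- integrate `0 ≤ ((b - a) g - S)²`
  have key : ∫ y in a..b, 2 * ((b - a) * S) * g y ≤
      ∫ y in a..b, ((b - a) ^ 2 * g y ^ 2 + S ^ 2) :=
    integral_mono_on hab (hg1.const_mul _) ((hg2.const_mul _).add intervalIntegrable_const)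
      fun y _ => by nlinarith [sq_nonneg ((b - a) * g y - S)]
  rw [intervalIntegral.integral_const_mul, integral_add (hg2.const_mul _) intervalIntegrable_const,
    intervalIntegral.integral_const_mul, intervalIntegral.integral_const, smul_eq_mul] at key
  nlinarith

variable {E : Type*} [NormedAddCommGroup E] [NormedSpace ℝ E] [CompleteSpace E]

theorem norm_sq_le_of_apply_eq_zero {g g' : ℝ → E} (hg0 : g a = 0)
    (hg : ContinuousOn g (Icc a b)) (hg' : ContinuousOn g' (Icc a b))
    (hderiv : ∀ y ∈ Ioo a b, HasDerivAt g (g' y) y) {x : ℝ} (hx : x ∈ Icc a b) :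
    ‖g x‖ ^ 2 ≤ (b - a) * ∫ y in a..b, ‖g' y‖ ^ 2 := by
  have hsub : Icc a x ⊆ Icc a b := Icc_subset_Icc_right hx.2
  have hgx : g x = ∫ y in a..x, g' y := by
    rw [integral_eq_sub_of_hasDerivAt_of_le hx.1 (hg.mono hsub)
      (fun y hy => hderiv y (Ioo_subset_Ioo_right hx.2 hy))
      ((hg'.mono hsub).intervalIntegrable_of_Icc hx.1), hg0, sub_zero]
  have hnorm : ‖g x‖ ≤ ∫ y in a..b, ‖g' y‖ := calc
    ‖g x‖ ≤ ∫ y in a..x, ‖g' y‖ := hgx ▸ norm_integral_le_integral_norm hx.1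
    _ ≤ ∫ y in a..b, ‖g' y‖ := integral_mono_interval le_rfl hx.1 hx.2
        (ae_of_all _ fun _ => norm_nonneg _) (hg'.norm.intervalIntegrable_of_Icc (hx.1.trans hx.2))
  calc ‖g x‖ ^ 2 ≤ (∫ y in a..b, ‖g' y‖) ^ 2 := pow_le_pow_left₀ (norm_nonneg _) hnorm 2
    _ ≤ (b - a) * ∫ y in a..b, ‖g' y‖ ^ 2 := sq_intervalIntegral_le (hx.1.trans hx.2) hg'.norm

theorem integral_norm_sq_le_of_apply_eq_zero {g g' : ℝ → E} (hab : a ≤ b) (hg0 : g a = 0)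
    (hg : ContinuousOn g (Icc a b)) (hg' : ContinuousOn g' (Icc a b))
    (hderiv : ∀ y ∈ Ioo a b, HasDerivAt g (g' y) y) :
    ∫ y in a..b, ‖g y‖ ^ 2 ≤ (b - a) ^ 2 * ∫ y in a..b, ‖g' y‖ ^ 2 := by
  calc ∫ y in a..b, ‖g y‖ ^ 2 ≤ ∫ _ in a..b, (b - a) * ∫ y in a..b, ‖g' y‖ ^ 2 :=
        integral_mono_on hab ((hg.norm.pow 2).intervalIntegrable_of_Icc hab)
          intervalIntegrable_const fun x hx => norm_sq_le_of_apply_eq_zero hg0 hg hg' hderiv hx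
    _ = (b - a) ^ 2 * ∫ y in a..b, ‖g' y‖ ^ 2 := by
        rw [intervalIntegral.integral_const, smul_eq_mul]; ring

end Poincare

theorem exists_mul_le_intervalIntegral {g : ℝ → ℝ} {a b : ℝ} (hab : a ≤ b)
    (hg : ContinuousOn g (Icc a b)) : ∃ c ∈ Icc a b, g c * (b - a) ≤ ∫ y in a..b, g y := by
  obtain ⟨c, hc, hmin⟩ := isCompact_Icc.exists_isMinOn (nonempty_Icc.2 hab) hg
  refine ⟨c, hc, ?_⟩
  have := integral_mono_on hab intervalIntegrable_const
    (hg.intervalIntegrable_of_Icc (μ := volume) hab) fun y hy => hmin hy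
  rwa [intervalIntegral.integral_const, smul_eq_mul, mul_comm] at this

theorem antitoneOn_Ici_of_hasDerivAt_nonpos {F F' : ℝ → ℝ} {a : ℝ}
    (hF : ContinuousOn F (Ici a)) (hderiv : ∀ t > a, HasDerivAt F (F' t) t)
    (hF' : ∀ t > a, F' t ≤ 0) : AntitoneOn F (Ici a) :=
  antitoneOn_of_hasDerivWithinAt_nonpos (convex_Ici a) hF
    (by simpa using fun t ht => (hderiv t ht).hasDerivWithinAt) (by simpa using hF')

theorem sqrt_le_mul_rpow_mul_sqrt {P x x₀ c : ℝ} (hP : 0 < P) (hc : 0 ≤ c)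
    (h : P * x ≤ c * x₀) : √x ≤ √c * P ^ (-(1 : ℝ) / 2) * √x₀ := by
  rw [neg_div, Real.rpow_neg hP.le, ← Real.sqrt_eq_rpow, mul_right_comm, ← div_eq_mul_inv,
    le_div_iff₀ (Real.sqrt_pos.2 hP), mul_comm, ← Real.sqrt_mul hP.le, ← Real.sqrt_mul hc]
  exact Real.sqrt_le_sqrt h

noncomputable def L2normSq (h : ℝ → ℂ) : ℝ :=
  ∫ y in (-1 : ℝ)..1, ‖h y‖ ^ 2

theorem L2normSq_nonneg (h : ℝ → ℂ) : 0 ≤ L2normSq h :=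
  integral_nonneg (by norm_num) fun _ _ => sq_nonneg _

theorem L2normSq_const_mul (c : ℂ) (h : ℝ → ℂ) :
    L2normSq (fun y => c * h y) = ‖c‖ ^ 2 * L2normSq h := by
  simp only [L2normSq, norm_mul, mul_pow, intervalIntegral.integral_const_mul]

theorem L2normSq_sub_le {h₁ h₂ : ℝ → ℂ} (h₁_cont : ContinuousOn h₁ (Icc (-1) 1))
    (h₂_cont : ContinuousOn h₂ (Icc (-1) 1)) :
    L2normSq (fun y => h₁ y - h₂ y) ≤ 2 * L2normSq h₁ + 2 * L2normSq h₂ := by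
  have hint : ∀ {g : ℝ → ℂ}, ContinuousOn g (Icc (-1) 1) →
      IntervalIntegrable (fun y => ‖g y‖ ^ 2) volume (-1) 1 :=
    fun hg => (hg.norm.pow 2).intervalIntegrable_of_Icc (by norm_num)
  rw [L2normSq, L2normSq, L2normSq, ← intervalIntegral.integral_const_mul,
    ← intervalIntegral.integral_const_mul, ← integral_add ((hint h₁_cont).const_mul 2)
      ((hint h₂_cont).const_mul 2)]
  refine integral_mono_on (by norm_num) (hint (h₁_cont.sub h₂_cont))
    (((hint h₁_cont).const_mul 2).add ((hint h₂_cont).const_mul 2)) fun y _ => ?_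
  nlinarith [norm_sub_le (h₁ y) (h₂ y), norm_nonneg (h₁ y - h₂ y),
    sq_nonneg (‖h₁ y‖ - ‖h₂ y‖)]

theorem continuousOn_L2normSq {w : ℝ → ℝ → ℂ}
    (hw : ContinuousOn (fun p : ℝ × ℝ => w p.1 p.2) (Ici 0 ×ˢ Icc (-1) 1)) :
    ContinuousOn (fun t => L2normSq (w t)) (Ici 0) :=
  continuousOn_intervalIntegral_of_continuousOn_prod (by norm_num) (hw.norm.pow 2)

/-- With `g' = ∂_y g`, this is `(∂_y + ik(t - s)) g`. -/
def twist (k s : ℝ) (g g' : ℝ → ℝ → ℂ) (t y : ℝ) : ℂ :=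
  g' t y + I * ↑(k * (t - s)) * g t y

section Twist

variable {k s : ℝ} {g g' : ℝ → ℝ → ℂ}

theorem twist_self : twist k s g g' s = g' s := by
  ext y
  simp [twist]

theorem continuousOn_twist {S : Set (ℝ × ℝ)} (hg : ContinuousOn (fun p : ℝ × ℝ => g p.1 p.2) S)
    (hg' : ContinuousOn (fun p : ℝ × ℝ => g' p.1 p.2) S) :
    ContinuousOn (fun p : ℝ × ℝ => twist k s g g' p.1 p.2) S :=
  hg'.add ((by fun_prop : Continuous fun p : ℝ × ℝ => I * ↑(k * (p.1 - s))).continuousOn.mul hg)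

theorem hasDerivAt_twist_space {g'' : ℝ → ℝ → ℂ} {t y : ℝ} (hg : HasDerivAt (g t) (g' t y) y)
    (hg' : HasDerivAt (g' t) (g'' t y) y) :
    HasDerivAt (twist k s g g' t) (twist k s g' g'' t y) y :=
  hg'.add (hg.const_mul _)

theorem hasDerivAt_twist_time {gt gt' : ℝ → ℝ → ℂ} {t y : ℝ}
    (hg : HasDerivAt (g · y) (gt t y) t) (hg' : HasDerivAt (g' · y) (gt' t y) t) :
    HasDerivAt (twist k s g g' · y) (gt' t y + I * k * g t y + I * ↑(k * (t - s)) * gt t y) t := by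
  have hc : HasDerivAt (fun τ : ℝ => I * ↑(k * (τ - s))) (I * k) t := by
    simpa using (((hasDerivAt_id t).sub_const s).const_mul k).ofReal_comp.const_mul I
  exact (hg'.add (hc.mul hg)).congr_deriv (by ring)

end Twist

/- In both identities each bracket `⟪p', q⟫ + ⟪p, q'⟫` is the `y`-derivative of `⟪p, q⟫`, with
`p ∈ {f, ∂_t f, y f}` vanishing at `y = ±1`, so it integrates to zero. -/
theorem two_inner_eq_of_pde (ν k y : ℝ) {F Fy Fyy Ft : ℂ}
    (hFt : Ft = ν * (Fyy - k ^ 2 * F) - I * k * y * F) :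
    2 * ⟪F, Ft⟫ = -(2 * ν) * ‖Fy‖ ^ 2 - 2 * ν * k ^ 2 * ‖F‖ ^ 2
      + 2 * ν * (⟪Fy, Fy⟫ + ⟪F, Fyy⟫) := by
  subst hFt
  simp only [← ofReal_pow, Complex.inner, Complex.sq_norm, normSq_apply, mul_re, mul_im, sub_re,
    sub_im, conj_re, conj_im, ofReal_re, ofReal_im, I_re, I_im]
  ring

theorem two_inner_twist_eq_of_pde (ν k y a : ℝ) {F Fy Fyy Ft Fty U Uy : ℂ}
    (hU : U = Fy + I * a * F) (hUy : Uy = Fyy + I * a * Fy)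
    (hFt : Ft = ν * (Fyy - k ^ 2 * F) - I * k * y * F) :
    2 * ⟪U, Fty + I * k * F + I * a * Ft⟫ =
      -(2 * ν) * ‖Uy‖ ^ 2 - 2 * ν * k ^ 2 * ‖U‖ ^ 2 + 2 * (⟪Fty, U⟫ + ⟪Ft, Uy⟫)
      + 2 * ν * (k ^ 2 + a ^ 2) * (⟪Fy, U⟫ + ⟪F, Uy⟫)
      - 2 * k * (⟪F + y * Fy, I * U⟫ + ⟪y * F, I * Uy⟫) := by
  subst hU hUy hFt
  simp only [← ofReal_pow, Complex.inner, Complex.sq_norm, normSq_apply, mul_re, mul_im, sub_re,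
    sub_im, add_re, add_im, conj_re, conj_im, ofReal_re, ofReal_im, I_re, I_im]
  ring

structure IsDriftDiffusionSolution (ν k : ℝ) (f ft fy fyy fty : ℝ → ℝ → ℂ) : Prop where
  continuousOn_f : ContinuousOn (fun p : ℝ × ℝ => f p.1 p.2) (Ici 0 ×ˢ Icc (-1) 1)
  continuousOn_ft : ContinuousOn (fun p : ℝ × ℝ => ft p.1 p.2) (Ici 0 ×ˢ Icc (-1) 1)
  continuousOn_fy : ContinuousOn (fun p : ℝ × ℝ => fy p.1 p.2) (Ici 0 ×ˢ Icc (-1) 1)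
  continuousOn_fyy : ContinuousOn (fun p : ℝ × ℝ => fyy p.1 p.2) (Ici 0 ×ˢ Icc (-1) 1)
  continuousOn_fty : ContinuousOn (fun p : ℝ × ℝ => fty p.1 p.2) (Ici 0 ×ˢ Icc (-1) 1)
  hasDerivAt_ft : ∀ t ∈ Ici (0 : ℝ), ∀ y ∈ Icc (-1 : ℝ) 1,
    HasDerivAt (fun s => f s y) (ft t y) t
  hasDerivAt_fy : ∀ t ∈ Ici (0 : ℝ), ∀ y ∈ Icc (-1 : ℝ) 1,
    HasDerivAt (fun z => f t z) (fy t y) y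
  hasDerivAt_fyy : ∀ t ∈ Ici (0 : ℝ), ∀ y ∈ Icc (-1 : ℝ) 1,
    HasDerivAt (fun z => fy t z) (fyy t y) y
  hasDerivAt_fty : ∀ t ∈ Ici (0 : ℝ), ∀ y ∈ Icc (-1 : ℝ) 1,
    HasDerivAt (fun s => fy s y) (fty t y) t
  pde : ∀ t ∈ Ici (0 : ℝ), ∀ y ∈ Ioo (-1 : ℝ) 1,
    ft t y = (ν : ℂ) * (fyy t y - (k : ℂ) ^ 2 * f t y) - I * (k : ℂ) * (y : ℂ) * f t y
  boundary : ∀ t ∈ Ici (0 : ℝ), f t (-1) = 0 ∧ f t 1 = 0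

namespace IsDriftDiffusionSolution

variable {ν k : ℝ} {f ft fy fyy fty : ℝ → ℝ → ℂ}
  (hS : IsDriftDiffusionSolution ν k f ft fy fyy fty)
include hS

theorem ft_boundary {t : ℝ} (ht : 0 < t) : ft t (-1) = 0 ∧ ft t 1 = 0 := by
  have hvanish : ∀ y ∈ Icc (-1 : ℝ) 1, (∀ s ≥ 0, f s y = 0) → ft t y = 0 := fun y hy h0 =>
    ((hS.hasDerivAt_ft t ht.le y hy).congr_of_eventuallyEq
      (Filter.eventually_of_mem (Ioi_mem_nhds ht) fun s hs => (h0 s (le_of_lt hs)).symm)).unique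
      (hasDerivAt_const t 0)
  exact ⟨hvanish (-1) (by norm_num) fun s hs => (hS.boundary s hs).1,
    hvanish 1 (by norm_num) fun s hs => (hS.boundary s hs).2⟩

theorem pde_of_mem_Icc {t y : ℝ} (ht : 0 ≤ t) (hy : y ∈ Icc (-1 : ℝ) 1) :
    ft t y = ν * (fyy t y - k ^ 2 * f t y) - I * k * y * f t y := by
  have hf := hS.continuousOn_f.uncurry_left t ht
  have hfyy := hS.continuousOn_fyy.uncurry_left t ht
  refine EqOn.of_subset_closure (hS.pde t ht) (hS.continuousOn_ft.uncurry_left t ht)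
    (by fun_prop) Ioo_subset_Icc_self ?_ hy
  rw [closure_Ioo (by norm_num)]

theorem hasDerivAt_ft_space {t y : ℝ} (ht : 0 < t) (hy : y ∈ Ioo (-1 : ℝ) 1) :
    HasDerivAt (ft t) (fty t y) y :=
  hasDerivAt_mixed_partial_comm ht hy hS.continuousOn_fy hS.continuousOn_fty
    (fun s hs => hS.hasDerivAt_ft s hs.le) (fun s hs => hS.hasDerivAt_fy s hs.le)
    (fun s hs => hS.hasDerivAt_fty s hs.le)

theorem integral_two_inner_ft_eq {t : ℝ} (ht : 0 < t) :
    ∫ y in (-1 : ℝ)..1, 2 * ⟪f t y, ft t y⟫ =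
      -(2 * ν) * L2normSq (fy t) - 2 * ν * k ^ 2 * L2normSq (f t) := by
  have hf := hS.continuousOn_f.uncurry_left t ht.le
  have hfy := hS.continuousOn_fy.uncurry_left t ht.le
  have hfyy := hS.continuousOn_fyy.uncurry_left t ht.le
  have hint : ∀ {g : ℝ → ℝ}, ContinuousOn g (Icc (-1) 1) → IntervalIntegrable g volume (-1) 1 :=
    fun hg => hg.intervalIntegrable_of_Icc (by norm_num)
  have hibp : ∫ y in (-1 : ℝ)..1, (⟪fy t y, fy t y⟫ + ⟪f t y, fyy t y⟫) = 0 :=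
    integral_inner_deriv_add_inner_deriv_eq_zero (by norm_num) hf hfy hfy hfyy
      (fun y hy => hS.hasDerivAt_fy t ht.le y (Ioo_subset_Icc_self hy))
      (fun y hy => hS.hasDerivAt_fyy t ht.le y (Ioo_subset_Icc_self hy))
      (hS.boundary t ht.le).1 (hS.boundary t ht.le).2
  rw [integral_congr fun y hy => two_inner_eq_of_pde ν k y (Fy := fy t y) (Fyy := fyy t y)
      (hS.pde_of_mem_Icc ht.le (by rwa [uIcc_of_le (by norm_num)] at hy)),
    integral_add (hint (by fun_prop)) (hint (by fun_prop)),
    integral_sub (hint (by fun_prop)) (hint (by fun_prop)),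
    intervalIntegral.integral_const_mul, intervalIntegral.integral_const_mul,
    intervalIntegral.integral_const_mul, hibp, L2normSq, L2normSq, mul_zero, add_zero]

theorem hasDerivAt_L2normSq {t : ℝ} (ht : 0 < t) :
    HasDerivAt (fun s => L2normSq (f s))
      (-(2 * ν) * L2normSq (fy t) - 2 * ν * k ^ 2 * L2normSq (f t)) t :=
  hS.integral_two_inner_ft_eq ht ▸ hasDerivAt_intervalIntegral_norm_sq (by norm_num) ht
    hS.continuousOn_f hS.continuousOn_ft fun s hs y hy => hS.hasDerivAt_ft s hs.le y hy

theorem integral_two_inner_twist_eq (s : ℝ) {t : ℝ} (ht : 0 < t) :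
    ∫ y in (-1 : ℝ)..1,
        2 * ⟪twist k s f fy t y, fty t y + I * k * f t y + I * ↑(k * (t - s)) * ft t y⟫ =
      -(2 * ν) * L2normSq (twist k s fy fyy t) - 2 * ν * k ^ 2 * L2normSq (twist k s f fy t) := by
  have hf := hS.continuousOn_f.uncurry_left t ht.le
  have hft := hS.continuousOn_ft.uncurry_left t ht.le
  have hfy := hS.continuousOn_fy.uncurry_left t ht.le
  have hfyy := hS.continuousOn_fyy.uncurry_left t ht.le
  have hfty := hS.continuousOn_fty.uncurry_left t ht.le
  have hu : ContinuousOn (twist k s f fy t) (Icc (-1) 1) :=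
    (continuousOn_twist hS.continuousOn_f hS.continuousOn_fy).uncurry_left t ht.le
  have huy : ContinuousOn (twist k s fy fyy t) (Icc (-1) 1) :=
    (continuousOn_twist hS.continuousOn_fy hS.continuousOn_fyy).uncurry_left t ht.le
  have hdf : ∀ y ∈ Ioo (-1 : ℝ) 1, HasDerivAt (f t) (fy t y) y :=
    fun y hy => hS.hasDerivAt_fy t ht.le y (Ioo_subset_Icc_self hy)
  have hdu : ∀ y ∈ Ioo (-1 : ℝ) 1, HasDerivAt (twist k s f fy t) (twist k s fy fyy t y) y :=
    fun y hy => hasDerivAt_twist_space (hdf y hy)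
      (hS.hasDerivAt_fyy t ht.le y (Ioo_subset_Icc_self hy))
  have hbdry := hS.boundary t ht.le
  have hint : ∀ {g : ℝ → ℝ}, ContinuousOn g (Icc (-1) 1) → IntervalIntegrable g volume (-1) 1 :=
    fun hg => hg.intervalIntegrable_of_Icc (by norm_num)
  have hibp_ft : ∫ y in (-1 : ℝ)..1,
      (⟪fty t y, twist k s f fy t y⟫ + ⟪ft t y, twist k s fy fyy t y⟫) = 0 :=
    integral_inner_deriv_add_inner_deriv_eq_zero (by norm_num) hft hu hfty huy
      (fun y hy => hS.hasDerivAt_ft_space ht hy) hdu (hS.ft_boundary ht).1 (hS.ft_boundary ht).2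
  have hibp_f : ∫ y in (-1 : ℝ)..1,
      (⟪fy t y, twist k s f fy t y⟫ + ⟪f t y, twist k s fy fyy t y⟫) = 0 :=
    integral_inner_deriv_add_inner_deriv_eq_zero (by norm_num) hf hu hfy huy hdf hdu
      hbdry.1 hbdry.2
  have hibp_yf : ∫ y in (-1 : ℝ)..1, (⟪f t y + y * fy t y, I * twist k s f fy t y⟫
      + ⟪y * f t y, I * twist k s fy fyy t y⟫) = 0 :=
    integral_inner_deriv_add_inner_deriv_eq_zero (p := fun y => y * f t y) (by norm_num)
      (by fun_prop) (by fun_prop) (by fun_prop) (by fun_prop)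
      (fun y hy => ((hasDerivAt_id y).ofReal_comp.mul (hdf y hy)).congr_deriv (by simp))
      (fun y hy => (hdu y hy).const_mul I) (by simp [hbdry.1]) (by simp [hbdry.2])
  rw [integral_congr fun y hy => two_inner_twist_eq_of_pde ν k y (k * (t - s))
      (U := twist k s f fy t y) (Uy := twist k s fy fyy t y) rfl rfl
      (hS.pde_of_mem_Icc ht.le (by rwa [uIcc_of_le (by norm_num)] at hy)),
    integral_sub (hint (by fun_prop)) (hint (by fun_prop)),
    integral_add (hint (by fun_prop)) (hint (by fun_prop)),
    integral_add (hint (by fun_prop)) (hint (by fun_prop)),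
    integral_sub (hint (by fun_prop)) (hint (by fun_prop))]
  simp only [intervalIntegral.integral_const_mul, hibp_ft, hibp_f, hibp_yf, L2normSq]
  ring

theorem hasDerivAt_L2normSq_twist (s : ℝ) {t : ℝ} (ht : 0 < t) :
    HasDerivAt (fun τ => L2normSq (twist k s f fy τ))
      (-(2 * ν) * L2normSq (twist k s fy fyy t) - 2 * ν * k ^ 2 * L2normSq (twist k s f fy t))
      t :=
  hS.integral_two_inner_twist_eq s ht ▸ hasDerivAt_intervalIntegral_norm_sq (by norm_num) ht
    (continuousOn_twist hS.continuousOn_f hS.continuousOn_fy)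
    (by have := hS.continuousOn_f; have := hS.continuousOn_ft; have := hS.continuousOn_fty
        fun_prop)
    fun τ hτ y hy => hasDerivAt_twist_time (hS.hasDerivAt_ft τ hτ.le y hy)
      (hS.hasDerivAt_fty τ hτ.le y hy)

theorem antitoneOn_L2normSq (hν : 0 ≤ ν) : AntitoneOn (fun t => L2normSq (f t)) (Ici 0) :=
  antitoneOn_Ici_of_hasDerivAt_nonpos (continuousOn_L2normSq hS.continuousOn_f)
    (fun _ ht => hS.hasDerivAt_L2normSq ht) fun t _ => by
      nlinarith [mul_nonneg hν (L2normSq_nonneg (fy t)),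
        mul_nonneg (mul_nonneg hν (sq_nonneg k)) (L2normSq_nonneg (f t))]

theorem antitoneOn_L2normSq_twist (hν : 0 ≤ ν) (s : ℝ) :
    AntitoneOn (fun t => L2normSq (twist k s f fy t)) (Ici 0) :=
  antitoneOn_Ici_of_hasDerivAt_nonpos
    (continuousOn_L2normSq (continuousOn_twist hS.continuousOn_f hS.continuousOn_fy))
    (fun _ ht => hS.hasDerivAt_L2normSq_twist s ht) fun t _ => by
      nlinarith [mul_nonneg hν (L2normSq_nonneg (twist k s fy fyy t)),
        mul_nonneg (mul_nonneg hν (sq_nonneg k)) (L2normSq_nonneg (twist k s f fy t))]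

theorem L2normSq_le_four_mul {t : ℝ} (ht : 0 ≤ t) : L2normSq (f t) ≤ 4 * L2normSq (fy t) := by
  have := integral_norm_sq_le_of_apply_eq_zero (by norm_num) (hS.boundary t ht).1
    (hS.continuousOn_f.uncurry_left t ht) (hS.continuousOn_fy.uncurry_left t ht)
    fun y hy => hS.hasDerivAt_fy t ht y (Ioo_subset_Icc_self hy)
  norm_num at this
  exact this

theorem sq_mul_L2normSq_le {s τ : ℝ} (hτ : 0 ≤ τ) :
    k ^ 2 * (τ - s) ^ 2 * L2normSq (f τ) ≤
      2 * L2normSq (twist k s f fy τ) + 2 * L2normSq (fy τ) := by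
  have htwist : (fun y => twist k s f fy τ y - fy τ y) = fun y => I * ↑(k * (τ - s)) * f τ y := by
    ext y
    simp [twist]
  calc k ^ 2 * (τ - s) ^ 2 * L2normSq (f τ)
      = L2normSq (fun y => twist k s f fy τ y - fy τ y) := by
        rw [htwist, L2normSq_const_mul, norm_mul, norm_I, one_mul, norm_real, Real.norm_eq_abs,
          sq_abs]
        ring
    _ ≤ 2 * L2normSq (twist k s f fy τ) + 2 * L2normSq (fy τ) :=
        L2normSq_sub_le
          ((continuousOn_twist hS.continuousOn_f hS.continuousOn_fy).uncurry_left τ hτ)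
          (hS.continuousOn_fy.uncurry_left τ hτ)

theorem two_mul_integral_L2normSq_le (hν : 0 ≤ ν) {t : ℝ} (ht : 0 ≤ t) :
    2 * ν * ∫ τ in (0 : ℝ)..t, L2normSq (fy τ) ≤ L2normSq (f 0) - L2normSq (f t) := by
  have hsub : Icc 0 t ⊆ Ici (0 : ℝ) := fun _ hτ => hτ.1
  have hA := (continuousOn_L2normSq hS.continuousOn_f).mono hsub
  have hB := (continuousOn_L2normSq hS.continuousOn_fy).mono hsub
  have hftc := integral_eq_sub_of_hasDerivAt_of_le ht hA
    (fun τ hτ => hS.hasDerivAt_L2normSq hτ.1)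
    ((by fun_prop : ContinuousOn (fun τ => -(2 * ν) * L2normSq (fy τ)
      - 2 * ν * k ^ 2 * L2normSq (f τ)) (Icc 0 t)).intervalIntegrable_of_Icc ht)
  have hle : ∫ τ in (0 : ℝ)..t, (-(2 * ν) * L2normSq (fy τ) - 2 * ν * k ^ 2 * L2normSq (f τ))
      ≤ ∫ τ in (0 : ℝ)..t, -(2 * ν) * L2normSq (fy τ) :=
    integral_mono_on ht ((by fun_prop : ContinuousOn _ (Icc 0 t)).intervalIntegrable_of_Icc ht)
      ((by fun_prop : ContinuousOn _ (Icc 0 t)).intervalIntegrable_of_Icc ht) fun τ _ => by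
        nlinarith [mul_nonneg (mul_nonneg hν (sq_nonneg k)) (L2normSq_nonneg (f τ))]
  rw [hftc, intervalIntegral.integral_const_mul] at hle
  linarith

theorem mul_L2normSq_le (hν : 0 ≤ ν) {t : ℝ} (ht : 0 ≤ t) :
    ν * t * L2normSq (f t) ≤ 2 * L2normSq (f 0) := by
  have hmono : ∫ _ in (0 : ℝ)..t, L2normSq (f t) / 4 ≤ ∫ τ in (0 : ℝ)..t, L2normSq (fy τ) :=
    integral_mono_on ht intervalIntegrable_const
      (((continuousOn_L2normSq hS.continuousOn_fy).mono fun _ hτ => hτ.1).intervalIntegrable_of_Icc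
        ht)
      fun τ hτ => by
        linarith [hS.antitoneOn_L2normSq hν hτ.1 ht hτ.2, hS.L2normSq_le_four_mul hτ.1]
  rw [intervalIntegral.integral_const, smul_eq_mul, sub_zero] at hmono
  nlinarith [hS.two_mul_integral_L2normSq_le hν ht, L2normSq_nonneg (f t)]

theorem mul_cube_L2normSq_le (hν : 0 ≤ ν) {t : ℝ} (ht : 0 ≤ t) :
    ν * k ^ 2 * t ^ 3 * L2normSq (f t) ≤ 27 * L2normSq (f 0) := by
  have hB : ∀ {a b : ℝ}, 0 ≤ a → ContinuousOn (fun τ => L2normSq (fy τ)) (Icc a b) :=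
    fun ha => (continuousOn_L2normSq hS.continuousOn_fy).mono fun _ hτ => ha.trans hτ.1
  have hint : ∀ {a b : ℝ}, 0 ≤ a → a ≤ b →
      IntervalIntegrable (fun τ => L2normSq (fy τ)) volume a b :=
    fun ha hab => (hB ha).intervalIntegrable_of_Icc hab
  obtain ⟨s, hs, hBs⟩ := exists_mul_le_intervalIntegral (by linarith : 0 ≤ t / 3) (hB le_rfl)
  obtain ⟨τ, hτ, hBτ⟩ := exists_mul_le_intervalIntegral (by linarith : 2 * t / 3 ≤ t)
    (hB (by linarith))
  have hτ0 : 0 ≤ τ := by linarith [hτ.1]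
  have hsplit : (∫ r in (0 : ℝ)..t / 3, L2normSq (fy r))
      + (∫ r in t / 3..2 * t / 3, L2normSq (fy r)) + (∫ r in 2 * t / 3..t, L2normSq (fy r))
      = ∫ r in (0 : ℝ)..t, L2normSq (fy r) := by
    rw [integral_add_adjacent_intervals (hint le_rfl (by linarith)) (hint (by linarith)
      (by linarith)), integral_add_adjacent_intervals (hint le_rfl (by linarith))
      (hint (by linarith) (by linarith))]
  have hmiddle : 0 ≤ ∫ r in t / 3..2 * t / 3, L2normSq (fy r) :=
    integral_nonneg (by linarith) fun r _ => L2normSq_nonneg (fy r)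
  have hgap : (t / 3) ^ 2 ≤ (τ - s) ^ 2 := by nlinarith [hs.2, hτ.1]
  have hvector : k ^ 2 * (t / 3) ^ 2 * L2normSq (f t) ≤ 2 * L2normSq (fy s) + 2 * L2normSq (fy τ) :=
    calc k ^ 2 * (t / 3) ^ 2 * L2normSq (f t) ≤ k ^ 2 * (τ - s) ^ 2 * L2normSq (f τ) := by
          gcongr
          · exact L2normSq_nonneg _
          · exact hS.antitoneOn_L2normSq hν hτ0 ht hτ.2
      _ ≤ 2 * L2normSq (twist k s f fy τ) + 2 * L2normSq (fy τ) := hS.sq_mul_L2normSq_le hτ0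
      _ ≤ 2 * L2normSq (twist k s f fy s) + 2 * L2normSq (fy τ) := by
          gcongr
          exact hS.antitoneOn_L2normSq_twist hν s hs.1 hτ0 (by linarith [hs.2, hτ.1])
      _ = 2 * L2normSq (fy s) + 2 * L2normSq (fy τ) := by rw [twist_self]
  have henergy := hS.two_mul_integral_L2normSq_le hν ht
  nlinarith [mul_le_mul_of_nonneg_left hvector (by positivity : 0 ≤ ν * t / 3),
    L2normSq_nonneg (f t)]

theorem L2normSq_decay (hν : 0 ≤ ν) {t : ℝ} (ht : 0 ≤ t) :
    (1 + ν * t + ν * k ^ 2 * t ^ 3) * L2normSq (f t) ≤ 30 * L2normSq (f 0) := by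
  linarith [hS.antitoneOn_L2normSq hν self_mem_Ici ht ht, hS.mul_L2normSq_le hν ht,
    hS.mul_cube_L2normSq_le hν ht]

end IsDriftDiffusionSolution

/-- Enhanced dissipation for the drift–diffusion equation at `x`-frequency `k ≠ 0`:
`‖f(t)‖_{L²} ≤ C (1 + νt + νk²t³)^{-1/2} ‖f(0)‖_{L²}`. -/
theorem enhanced_dissipation_f :
    ∃ C > (0 : ℝ), ∀ (ν k : ℝ) (f ft fy fyy fty : ℝ → ℝ → ℂ),
      0 < ν → k ≠ 0 →
      ContinuousOn (fun p : ℝ × ℝ => f p.1 p.2) (Ici 0 ×ˢ Icc (-1) 1) →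
      ContinuousOn (fun p : ℝ × ℝ => ft p.1 p.2) (Ici 0 ×ˢ Icc (-1) 1) →
      ContinuousOn (fun p : ℝ × ℝ => fy p.1 p.2) (Ici 0 ×ˢ Icc (-1) 1) →
      ContinuousOn (fun p : ℝ × ℝ => fyy p.1 p.2) (Ici 0 ×ˢ Icc (-1) 1) →
      ContinuousOn (fun p : ℝ × ℝ => fty p.1 p.2) (Ici 0 ×ˢ Icc (-1) 1) →
      (∀ t ∈ Ici (0 : ℝ), ∀ y ∈ Icc (-1 : ℝ) 1,
        HasDerivAt (fun s => f s y) (ft t y) t) →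
      (∀ t ∈ Ici (0 : ℝ), ∀ y ∈ Icc (-1 : ℝ) 1,
        HasDerivAt (fun z => f t z) (fy t y) y) →
      (∀ t ∈ Ici (0 : ℝ), ∀ y ∈ Icc (-1 : ℝ) 1,
        HasDerivAt (fun z => fy t z) (fyy t y) y) →
      (∀ t ∈ Ici (0 : ℝ), ∀ y ∈ Icc (-1 : ℝ) 1,
        HasDerivAt (fun s => fy s y) (fty t y) t) →
      (∀ t ∈ Ici (0 : ℝ), ∀ y ∈ Ioo (-1 : ℝ) 1,
        ft t y = (ν : ℂ) * (fyy t y - (k : ℂ) ^ 2 * f t y)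
          - Complex.I * (k : ℂ) * (y : ℂ) * f t y) →
      (∀ t ∈ Ici (0 : ℝ), f t (-1) = 0 ∧ f t 1 = 0) →
      ∀ t : ℝ, 0 ≤ t →
        L2norm (f t)
          ≤ C * (1 + ν * t + ν * k ^ 2 * t ^ 3) ^ (-(1 : ℝ) / 2) * L2norm (f 0) := by
  refine ⟨√30, by positivity, fun ν k f ft fy fyy fty hν _ hf hft hfy hfyy hfty hdt hdy hdyy hdty
    heq hbdry t ht => ?_⟩
  have hS : IsDriftDiffusionSolution ν k f ft fy fyy fty :=
    ⟨hf, hft, hfy, hfyy, hfty, hdt, hdy, hdyy, hdty, heq, hbdry⟩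
  exact sqrt_le_mul_rpow_mul_sqrt (by positivity) (by norm_num) (hS.L2normSq_decay hν.le ht)
end

section
/- There is a universal constant C > 0 such that: for every k ∈ ℝ with |k| ≥ 1, every t ≥ 0, and all functions ψ, w : [−1,1] → ℂ with ψ twice continuously differentiable, w continuously differentiable, ψ(±1) = 0, w(±1) = 0, and ψ''(y) − k² ψ(y) = −w(y) on (−1,1), one has |k|² ( ‖ψ'‖²_{L²} + k² ‖ψ‖²_{L²} )^{1/2} ≤ C (1+t)^{−1} ( ‖(e_{k,t} w)'‖²_{L²} + k² ‖w‖²_{L²} )^{1/2}, where e_{k,t}(y) = e^{i k y t} and (e_{k,t} w)'(y) = e^{ikyt}( w'(y) + i k t w(y) ). -/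
open Set

/-- The squared `L²` norm of a function on the interval `(-1, 1)`. -/
noncomputable def L2sq (h : ℝ → ℂ) : ℝ :=
  ∫ y in (-1 : ℝ)..1, ‖h y‖ ^ 2

/-- The function `y ↦ e^{ikyt} w(y)`. -/
noncomputable def ew (k t : ℝ) (w : ℝ → ℂ) : ℝ → ℂ :=
  fun y => Complex.exp (Complex.I * (k : ℂ) * (y : ℂ) * (t : ℂ)) * w y

/-!
Pairing `ψ'' - k²ψ = -w` with `ψ` and integrating by parts gives
`⟨w, ψ⟩ = ‖ψ'‖² + k²‖ψ‖² =: E`, so `E ≤ ‖w‖ ‖ψ‖` and hence `k² √E ≤ |k| ‖w‖`.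
For the factor `t`, write `ikt w = e^{-ikyt} (e^{ikyt} w)' - w'`; pairing with `ψ` and moving
the derivative of `w'` onto `ψ` gives `|k| t E ≤ ‖(e w)'‖ ‖ψ‖ + ‖w‖ ‖ψ'‖`, hence
`t k² √E ≤ 2 ‖(∂_y, k)(e w)‖`. Since `|e| = 1`, both bounds are by `‖(∂_y, k)(e w)‖`.
-/

open MeasureTheory Complex intervalIntegral

lemma L2sq_nonneg (h : ℝ → ℂ) : 0 ≤ L2sq h :=
  integral_nonneg (by norm_num) fun _ _ => by positivity

lemma integral_mul_star_self (h : ℝ → ℂ) :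
    ∫ y in (-1 : ℝ)..1, h y * star (h y) = (L2sq h : ℂ) := by
  simp only [star_def, mul_conj', L2sq, ← ofReal_pow, integral_ofReal]

lemma memLp_two_restrict_Ioc_of_continuous {f : ℝ → ℂ} (hf : Continuous f) :
    MemLp f (ENNReal.ofReal 2) (volume.restrict (Ioc (-1 : ℝ) 1)) := by
  obtain ⟨M, hM⟩ := (isCompact_Icc (a := (-1 : ℝ)) (b := 1)).exists_bound_of_continuousOn
    hf.continuousOn
  refine MemLp.of_bound hf.aestronglyMeasurable M ?_
  filter_upwards [ae_restrict_mem measurableSet_Ioc] with y hy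
  exact hM y (Ioc_subset_Icc_self hy)

lemma norm_integral_mul_star_le {f g : ℝ → ℂ} (hf : Continuous f) (hg : Continuous g) :
    ‖∫ y in (-1 : ℝ)..1, f y * star (g y)‖ ≤ √(L2sq f) * √(L2sq g) := by
  have hsqrt : ∀ h : ℝ → ℂ,
      (∫ y in Ioc (-1 : ℝ) 1, ‖h y‖ ^ (2 : ℝ)) ^ ((1 : ℝ) / 2) = √(L2sq h) := fun h => by
    rw [Real.sqrt_eq_rpow, L2sq, integral_of_le (by norm_num)]
    norm_num [Real.rpow_natCast]
  calc ‖∫ y in (-1 : ℝ)..1, f y * star (g y)‖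
      ≤ ∫ y in (-1 : ℝ)..1, ‖f y‖ * ‖g y‖ := by
        simpa only [norm_mul, norm_star] using
          norm_integral_le_integral_norm (f := fun y => f y * star (g y)) (by norm_num)
    _ ≤ √(L2sq f) * √(L2sq g) := by
        rw [integral_of_le (by norm_num), ← hsqrt f, ← hsqrt g]
        exact integral_mul_norm_le_Lp_mul_Lq (Real.HolderConjugate.two_two)
          (memLp_two_restrict_Ioc_of_continuous hf) (memLp_two_restrict_Ioc_of_continuous hg)

lemma integral_deriv_mul_star_eq_neg {a b : ℝ} {u v : ℝ → ℂ} (hu : ContDiff ℝ 1 u)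
    (hv : ContDiff ℝ 1 v) (hva : v a = 0) (hvb : v b = 0) :
    ∫ y in a..b, deriv u y * star (v y) = -∫ y in a..b, u y * star (deriv v y) := by
  have hibp := integral_mul_deriv_eq_deriv_mul (a := a) (b := b) (u := u)
    (v := fun y => star (v y)) (u' := deriv u) (v' := fun y => star (deriv v y))
    (fun y _ => (hu.differentiable one_ne_zero y).hasDerivAt)
    (fun y _ => (hv.differentiable one_ne_zero y).hasDerivAt.star)
    ((hu.continuous_deriv le_rfl).intervalIntegrable _ _)
    ((hv.continuous_deriv le_rfl).star.intervalIntegrable _ _)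
  simp only [hva, hvb, star_zero, mul_zero, sub_zero, zero_sub] at hibp
  rw [hibp, neg_neg]

lemma integral_mul_star_eq_energy {k : ℝ} {ψ w : ℝ → ℂ} (hψ : ContDiff ℝ 2 ψ)
    (hw : Continuous w) (hψa : ψ (-1) = 0) (hψb : ψ 1 = 0)
    (hODE : ∀ y ∈ Ioo (-1 : ℝ) 1, deriv (deriv ψ) y - (k : ℂ) ^ 2 * ψ y = -w y) :
    ∫ y in (-1 : ℝ)..1, w y * star (ψ y) = ((L2sq (deriv ψ) + k ^ 2 * L2sq ψ : ℝ) : ℂ) := by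
  have hψ' : ContDiff ℝ 1 (deriv ψ) := ContDiff.deriv' (n := 1) hψ
  have hψc := hψ.continuous
  have hψ''c := hψ'.continuous_deriv_one
  have hw_eq : EqOn w (fun y => (k : ℂ) ^ 2 * ψ y - deriv (deriv ψ) y) (Icc (-1) 1) := by
    rw [← closure_Ioo (by norm_num : (-1 : ℝ) ≠ 1)]
    exact EqOn.closure (fun y hy => by linear_combination hODE y hy) hw (by fun_prop)
  have hψ_ψ'' := integral_deriv_mul_star_eq_neg hψ' (hψ.of_le one_le_two) hψa hψb
  calc ∫ y in (-1 : ℝ)..1, w y * star (ψ y)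
      = ∫ y in (-1 : ℝ)..1, (k : ℂ) ^ 2 * (ψ y * star (ψ y)) - deriv (deriv ψ) y * star (ψ y) :=
        integral_congr fun y hy => by
          rw [uIcc_of_le (by norm_num)] at hy
          rw [hw_eq hy]; ring
    _ = _ := by
      rw [intervalIntegral.integral_sub, intervalIntegral.integral_const_mul,
        integral_mul_star_self, hψ_ψ'', integral_mul_star_self]
      · push_cast; ring
      all_goals exact Continuous.intervalIntegrable (by fun_prop) _ _

lemma norm_exp_I_mul_mul_mul (k y t : ℝ) : ‖cexp (I * k * y * t)‖ = 1 := by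
  rw [show I * k * y * t = ((k * y * t : ℝ) : ℂ) * I by push_cast; ring]
  exact norm_exp_ofReal_mul_I _

lemma L2sq_ew (k t : ℝ) (w : ℝ → ℂ) : L2sq (ew k t w) = L2sq w := by
  simp only [L2sq, ew, norm_mul, norm_exp_I_mul_mul_mul, one_mul]

lemma hasDerivAt_ew (k t : ℝ) {w : ℝ → ℂ} {w' : ℂ} {y : ℝ} (hw : HasDerivAt w w' y) :
    HasDerivAt (ew k t w) (cexp (I * k * y * t) * (w' + I * k * t * w y)) y := by
  have hphase : HasDerivAt (fun y : ℝ => I * k * y * t) (I * k * t) y := by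
    simpa [mul_comm, mul_left_comm] using
      ((hasDerivAt_id y).ofReal_comp.const_mul (I * k)).mul_const (t : ℂ)
  exact (hphase.cexp.mul hw).congr_deriv (by ring)

lemma contDiff_ew (k t : ℝ) {w : ℝ → ℂ} (hw : ContDiff ℝ 1 w) : ContDiff ℝ 1 (ew k t w) := by
  have : ContDiff ℝ 1 (fun y : ℝ => (y : ℂ)) := ofRealCLM.contDiff
  unfold ew
  fun_prop

lemma deriv_ew_mul_star_ew (k t : ℝ) {ψ w : ℝ → ℂ} (hw : Differentiable ℝ w) (y : ℝ) :
    deriv (ew k t w) y * star (ew k t ψ y) = (deriv w y + I * k * t * w y) * star (ψ y) := by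
  have hunit : cexp (I * k * y * t) * star (cexp (I * k * y * t)) = 1 := by
    rw [star_def, mul_conj', norm_exp_I_mul_mul_mul]; norm_num
  rw [(hasDerivAt_ew k t (hw y).hasDerivAt).deriv, ew, star_mul']
  linear_combination (deriv w y + I * k * t * w y) * star (ψ y) * hunit

lemma I_mul_integral_mul_star_eq {k t : ℝ} {ψ w : ℝ → ℂ} (hψ : ContDiff ℝ 1 ψ)
    (hw : ContDiff ℝ 1 w) (hψa : ψ (-1) = 0) (hψb : ψ 1 = 0) :
    I * k * t * ∫ y in (-1 : ℝ)..1, w y * star (ψ y)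
      = (∫ y in (-1 : ℝ)..1, deriv (ew k t w) y * star (ew k t ψ y))
        + ∫ y in (-1 : ℝ)..1, w y * star (deriv ψ y) := by
  have hψc := hψ.continuous
  have hwc := hw.continuous
  have hw'c := hw.continuous_deriv_one
  simp only [deriv_ew_mul_star_ew k t (hw.differentiable one_ne_zero), add_mul,
    mul_assoc (I * k * t)]
  rw [intervalIntegral.integral_add, intervalIntegral.integral_const_mul,
    integral_deriv_mul_star_eq_neg hw hψ hψa hψb]
  · ring
  all_goals exact Continuous.intervalIntegrable (by fun_prop) _ _

lemma abs_mul_mul_norm_integral_mul_star_le {k t : ℝ} {ψ w : ℝ → ℂ} (ht : 0 ≤ t)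
    (hψ : ContDiff ℝ 2 ψ) (hw : ContDiff ℝ 1 w) (hψa : ψ (-1) = 0) (hψb : ψ 1 = 0) :
    |k| * t * ‖∫ y in (-1 : ℝ)..1, w y * star (ψ y)‖
      ≤ √(L2sq (deriv (ew k t w))) * √(L2sq ψ) + √(L2sq w) * √(L2sq (deriv ψ)) := by
  have hψ₁ : ContDiff ℝ 1 ψ := hψ.of_le one_le_two
  calc |k| * t * ‖∫ y in (-1 : ℝ)..1, w y * star (ψ y)‖
      = ‖I * k * t * ∫ y in (-1 : ℝ)..1, w y * star (ψ y)‖ := by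
        rw [norm_mul, norm_mul, norm_mul, norm_I, norm_real, norm_real, Real.norm_eq_abs,
          Real.norm_of_nonneg ht, one_mul]
    _ ≤ √(L2sq (deriv (ew k t w))) * √(L2sq (ew k t ψ)) + √(L2sq w) * √(L2sq (deriv ψ)) := by
        rw [I_mul_integral_mul_star_eq hψ₁ hw hψa hψb]
        exact (norm_add_le _ _).trans <| add_le_add
          (norm_integral_mul_star_le (contDiff_ew k t hw).continuous_deriv_one
            (contDiff_ew k t hψ₁).continuous)
          (norm_integral_mul_star_le hw.continuous (ContDiff.deriv' (n := 1) hψ).continuous)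
    _ = √(L2sq (deriv (ew k t w))) * √(L2sq ψ) + √(L2sq w) * √(L2sq (deriv ψ)) := by
        rw [L2sq_ew]

lemma le_of_mul_sq_le_mul {a b c : ℝ} (ha : 0 ≤ a) (hb : 0 ≤ b) (h : c * a ^ 2 ≤ b * a) :
    c * a ≤ b := by
  rcases ha.eq_or_lt with rfl | ha
  · simpa using hb
  · exact le_of_mul_le_mul_right (by linarith) ha

lemma sq_abs_mul_sqrt_le_of_energy_bounds {k t P P' Q Q' : ℝ} (ht : 0 ≤ t) (hP : 0 ≤ P)
    (hP' : 0 ≤ P') (hQ : 0 ≤ Q) (hQ' : 0 ≤ Q')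
    (h₁ : P' + k ^ 2 * P ≤ √Q * √P)
    (h₂ : |k| * t * (P' + k ^ 2 * P) ≤ √Q' * √P + √Q * √P') :
    |k| ^ 2 * √(P' + k ^ 2 * P) ≤ 3 * (1 + t)⁻¹ * √(Q' + k ^ 2 * Q) := by
  set E := P' + k ^ 2 * P
  set F := Q' + k ^ 2 * Q
  have hE : 0 ≤ E := by positivity
  have habs_mul_sqrt : ∀ X, |k| * √X = √(k ^ 2 * X) := fun X => by
    rw [Real.sqrt_mul (sq_nonneg k), Real.sqrt_sq_eq_abs]
  have hkP : |k| * √P ≤ √E := habs_mul_sqrt P ▸ Real.sqrt_le_sqrt (by linarith)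
  have hP'E : √P' ≤ √E := Real.sqrt_le_sqrt (le_add_of_nonneg_right (by positivity))
  have hkQ : |k| * √Q ≤ √F := habs_mul_sqrt Q ▸ Real.sqrt_le_sqrt (by linarith)
  have hQ'F : √Q' ≤ √F := Real.sqrt_le_sqrt (le_add_of_nonneg_right (by positivity))
  have hkE : |k| ^ 2 * √E ≤ √F := le_of_mul_sq_le_mul (by positivity) (by positivity) <| calc
    |k| ^ 2 * √E ^ 2 = |k| ^ 2 * E := by rw [Real.sq_sqrt hE]
    _ ≤ |k| ^ 2 * (√Q * √P) := by gcongr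
    _ = (|k| * √Q) * (|k| * √P) := by ring
    _ ≤ √F * √E := by gcongr
  have htkE : t * |k| ^ 2 * √E ≤ 2 * √F :=
    le_of_mul_sq_le_mul (by positivity) (by positivity) <| calc
      t * |k| ^ 2 * √E ^ 2 = |k| * (|k| * t * E) := by rw [Real.sq_sqrt hE]; ring
      _ ≤ |k| * (√Q' * √P + √Q * √P') := by gcongr
      _ = √Q' * (|k| * √P) + (|k| * √Q) * √P' := by ring
      _ ≤ √F * √E + √F * √E := by gcongr
      _ = 2 * √F * √E := by ring
  rw [mul_right_comm, ← div_eq_mul_inv, le_div_iff₀ (by positivity)]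
  linarith

/-- High-frequency stream function estimate:
`|k|² ‖(∂_y,k)ψ‖ ≤ C (1+t)^{-1} ‖(∂_y,k)(e^{ikyt}w)‖` for `|k| ≥ 1`. -/
theorem psi_highfreq_first :
    ∃ C > (0 : ℝ), ∀ (k t : ℝ) (ψ w : ℝ → ℂ),
      1 ≤ |k| → 0 ≤ t →
      ContDiff ℝ 2 ψ → ContDiff ℝ 1 w →
      ψ (-1) = 0 → ψ 1 = 0 → w (-1) = 0 → w 1 = 0 →
      (∀ y ∈ Ioo (-1 : ℝ) 1, deriv (deriv ψ) y - (k : ℂ) ^ 2 * ψ y = -w y) →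
      |k| ^ 2 * Real.sqrt (L2sq (deriv ψ) + k ^ 2 * L2sq ψ)
        ≤ C * (1 + t)⁻¹ * Real.sqrt (L2sq (deriv (ew k t w)) + k ^ 2 * L2sq w) := by
  refine ⟨3, by norm_num, fun k t ψ w _ ht hψ hw hψa hψb _ _ hODE => ?_⟩
  have hpair := integral_mul_star_eq_energy hψ hw.continuous hψa hψb hODE
  have hE : 0 ≤ L2sq (deriv ψ) + k ^ 2 * L2sq ψ :=
    add_nonneg (L2sq_nonneg _) (mul_nonneg (sq_nonneg k) (L2sq_nonneg _))
  have hnorm_pair :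
      ‖∫ y in (-1 : ℝ)..1, w y * star (ψ y)‖ = L2sq (deriv ψ) + k ^ 2 * L2sq ψ := by
    rw [hpair, norm_real, Real.norm_of_nonneg hE]
  refine sq_abs_mul_sqrt_le_of_energy_bounds ht (L2sq_nonneg _) (L2sq_nonneg _) (L2sq_nonneg _)
    (L2sq_nonneg _) ?_ ?_
  · exact hnorm_pair ▸ norm_integral_mul_star_le hw.continuous hψ.continuous
  · exact hnorm_pair ▸ abs_mul_mul_norm_integral_mul_star_le ht hψ hw hψa hψb
end
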